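/- arXiv:math/0402302 — 3 statements merged into one kernel-verified Lean document; each statement's English description precedes it below -/
import Mathlib

section
/- Let (X,P) be an irreducible Markov chain on a countable state space X, and suppose there exist ε ∈ (0,1) and a finite subset A ⊂ X such that sup_{x∈X} Σ_{y∈X∖A} p(x,y) < ε. Then (X,P) is positive recurrent, i.e., for every x ∈ X the mean return time τ̄_x = Σ_{n≥1} n f^{(n)}(x,x) is finite. -/
open scoped Classical ENNReal

noncomputable section

/-- The `n`-step transition probabilities: the entries of the `n`-th matrix power of `p`. -/
def matPow {X : Type*} (p : X → X → ℝ) : ℕ → X → X → ℝ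
  | 0 => fun x y => if x = y then 1 else 0
  | n + 1 => fun x y => ∑' z, matPow p n x z * p z y

/-- The first-return probabilities `f⁽ⁿ⁾(x,y)`. -/
def fret {X : Type*} (p : X → X → ℝ) : ℕ → X → X → ℝ
  | 0 => fun _ _ => 0
  | 1 => fun x y => p x y
  | n + 2 => fun x y => ∑' z, if z = y then 0 else p x z * fret p (n + 1) z y

/-- `p` is a stochastic matrix. -/
def IsStochastic {X : Type*} (p : X → X → ℝ) : Prop :=
  (∀ x y, 0 ≤ p x y) ∧ (∀ x, Summable (p x)) ∧ (∀ x, ∑' y, p x y = 1)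

/-! Fix `x` and let `S_n(z)` be the probability, from `z`, of avoiding `x` at the times
`1, …, n`, so that `f⁽ⁿ⁺¹⁾(z, x) ≤ S_n(z)`. Irreducibility gives every state a path of positive
probability into `x`, hence `S_n(a) < 1` for some `n`; as `A` is finite and `S_n` is antitone in
`n`, there are `N` and `c < 1` with `S_N ≤ c` on `A`. A first step from any `z` lands in `A` or,
with probability at most `ε`, outside it, so `S_{N+1}(z) ≤ c + (1 - c) ε < 1` uniformly in `z`.
By the Markov property `S` is submultiplicative over blocks of `N + 1` steps, so `f⁽ⁿ⁾(x, x)`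
decays geometrically and `∑ n f⁽ⁿ⁾(x, x)` converges. -/

open Relation

theorem ENNReal.ofReal_tsum_le {α : Type*} {f : α → ℝ} (hf : ∀ a, 0 ≤ f a) :
    ENNReal.ofReal (∑' a, f a) ≤ ∑' a, ENNReal.ofReal (f a) := by
  by_cases hs : Summable f
  · exact (ENNReal.ofReal_tsum_of_nonneg hf hs).le
  · simp [tsum_eq_zero_of_not_summable hs]

theorem ENNReal.add_tsub_mul_lt_one {c η : ℝ≥0∞} (hc : c < 1) (hη : η < 1) :
    c + (1 - c) * η < 1 := by
  calc c + (1 - c) * η < c + (1 - c) * 1 := by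
        refine ENNReal.add_lt_add_left hc.ne_top (ENNReal.mul_lt_mul_right ?_ ?_ hη)
        exacts [(tsub_pos_of_lt hc).ne', ENNReal.sub_ne_top ENNReal.one_ne_top]
    _ = 1 := by rw [mul_one, add_tsub_cancel_of_le hc.le]

theorem exists_pow_div_le_mul_pow {r : ℝ} (hr0 : 0 < r) (hr1 : r < 1) {M : ℕ} (hM : 0 < M) :
    ∃ ρ : ℝ, 0 ≤ ρ ∧ ρ < 1 ∧ ∀ n : ℕ, r ^ (n / M) ≤ r⁻¹ * ρ ^ (n + 1) := by
  set ρ := r ^ ((M : ℝ)⁻¹)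
  have hρM : ρ ^ M = r := Real.rpow_inv_natCast_pow hr0.le hM.ne'
  have hρ1 : ρ ≤ 1 := Real.rpow_le_one hr0.le hr1.le (by positivity)
  refine ⟨ρ, by positivity, Real.rpow_lt_one hr0.le hr1 (by positivity), fun n => ?_⟩
  calc r ^ (n / M) = r⁻¹ * ρ ^ (M * (n / M + 1)) := by
        rw [pow_mul, hρM, pow_succ, mul_comm, mul_inv_cancel_right₀ hr0.ne']
    _ ≤ r⁻¹ * ρ ^ (n + 1) := mul_le_mul_of_nonneg_left
        (pow_le_pow_of_le_one (by positivity) hρ1 (Nat.lt_mul_div_succ n hM)) (by positivity)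

namespace IsStochastic

variable {X : Type*} {p : X → X → ℝ}

theorem tsum_ofReal_eq_one (hp : IsStochastic p) (x : X) : ∑' y, ENNReal.ofReal (p x y) = 1 := by
  rw [← ENNReal.ofReal_tsum_of_nonneg (hp.1 x) (hp.2.1 x), hp.2.2 x, ENNReal.ofReal_one]

theorem tsum_ofReal_ite_eq (hp : IsStochastic p) (A : Finset X) (x : X) :
    ∑' y, ENNReal.ofReal (if y ∈ A then 0 else p x y)
      = ENNReal.ofReal (∑' y, if y ∈ A then 0 else p x y) := by
  have hnonneg : ∀ y, 0 ≤ if y ∈ A then 0 else p x y := fun y => by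
    split_ifs
    exacts [le_rfl, hp.1 x y]
  have hle : ∀ y, (if y ∈ A then 0 else p x y) ≤ p x y := fun y => by
    split_ifs
    exacts [hp.1 x y, le_rfl]
  exact (ENNReal.ofReal_tsum_of_nonneg hnonneg (.of_nonneg_of_le hnonneg hle (hp.2.1 x))).symm

theorem reflTransGen_of_matPow_ne_zero (hp : IsStochastic p) {n : ℕ} {x y : X}
    (h : matPow p n x y ≠ 0) : ReflTransGen (fun a b => 0 < p a b) x y := by
  induction n generalizing y with
  | zero =>
    obtain rfl : x = y := by by_contra hxy; simp [matPow, hxy] at h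
    exact .refl
  | succ n ih =>
    obtain ⟨z, hz⟩ : ∃ z, matPow p n x z * p z y ≠ 0 := by
      by_contra! hzero
      simp [matPow, hzero] at h
    exact (ih (left_ne_zero_of_mul hz)).tail ((hp.1 z y).lt_of_ne' (right_ne_zero_of_mul hz))

theorem transGen_of_irreducible (hp : IsStochastic p)
    (hirr : ∀ x y : X, ∃ n : ℕ, 0 < matPow p n x y) (a x : X) :
    TransGen (fun a b => 0 < p a b) a x := by
  obtain ⟨w, hw⟩ : ∃ w, 0 < p a w := by
    by_contra! h
    have hzero : ∀ w, p a w = 0 := fun w => (h w).antisymm (hp.1 a w)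
    simpa [hzero] using hp.2.2 a
  obtain ⟨n, hn⟩ := hirr w x
  exact .head' hw (hp.reflTransGen_of_matPow_ne_zero hn.ne')

end IsStochastic

/-- The probability, started at `z`, of not visiting `x₀` at any of the times `1, …, n`
(time `0` does not count, so `z = x₀` is allowed). -/
def avoidProb {X : Type*} (p : X → X → ℝ) (x₀ : X) : ℕ → X → ℝ≥0∞
  | 0 => fun _ => 1
  | n + 1 => fun z => ∑' w, if w = x₀ then 0 else ENNReal.ofReal (p z w) * avoidProb p x₀ n w

section

variable {X : Type*} {p : X → X → ℝ} {x₀ : X}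

namespace avoidProb

theorem le_one (hp : IsStochastic p) (n : ℕ) (z : X) : avoidProb p x₀ n z ≤ 1 := by
  induction n generalizing z with
  | zero => exact le_rfl
  | succ n ih =>
    calc avoidProb p x₀ (n + 1) z
        ≤ ∑' w, ENNReal.ofReal (p z w) := by
          refine ENNReal.tsum_le_tsum fun w => ?_
          split_ifs
          · exact zero_le
          · exact mul_le_of_le_one_right' (ih w)
      _ = 1 := hp.tsum_ofReal_eq_one z

theorem succ_le (hp : IsStochastic p) (n : ℕ) (z : X) :
    avoidProb p x₀ (n + 1) z ≤ avoidProb p x₀ n z := by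
  induction n generalizing z with
  | zero => exact le_one hp 1 z
  | succ n ih =>
    refine ENNReal.tsum_le_tsum fun w => ?_
    split_ifs
    · exact le_rfl
    · exact mul_le_mul_right (ih w) _

theorem antitone (hp : IsStochastic p) (z : X) : Antitone fun n => avoidProb p x₀ n z :=
  antitone_nat_of_succ_le fun n => succ_le hp n z

theorem succ_lt_one (hp : IsStochastic p) {n : ℕ} {a b : X} (hab : 0 < p a b)
    (hb : b = x₀ ∨ avoidProb p x₀ n b < 1) : avoidProb p x₀ (n + 1) a < 1 := by
  have hterm : ∀ w, (if w = x₀ then 0 else ENNReal.ofReal (p a w) * avoidProb p x₀ n w)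
      ≤ ENNReal.ofReal (p a w) := fun w => by
    split_ifs
    · exact zero_le
    · exact mul_le_of_le_one_right' (le_one hp n w)
  have hstrict : (if b = x₀ then 0 else ENNReal.ofReal (p a b) * avoidProb p x₀ n b)
      < ENNReal.ofReal (p a b) := by
    have hpos : ENNReal.ofReal (p a b) ≠ 0 := (ENNReal.ofReal_pos.2 hab).ne'
    rcases hb with rfl | hb
    · simpa using pos_iff_ne_zero.2 hpos
    split_ifs
    · exact pos_iff_ne_zero.2 hpos
    · simpa using ENNReal.mul_lt_mul_right hpos ENNReal.ofReal_ne_top hb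
  calc avoidProb p x₀ (n + 1) a
      < ∑' w, ENNReal.ofReal (p a w) :=
        ENNReal.tsum_lt_tsum (ne_top_of_le_ne_top ENNReal.one_ne_top (le_one hp (n + 1) a))
          hterm hstrict
    _ = 1 := hp.tsum_ofReal_eq_one a

theorem exists_lt_one_of_transGen (hp : IsStochastic p) {a : X}
    (h : TransGen (fun a b => 0 < p a b) a x₀) : ∃ n, avoidProb p x₀ n a < 1 := by
  induction h using TransGen.head_induction_on with
  | single hab => exact ⟨1, succ_lt_one (n := 0) hp hab (.inl rfl)⟩
  | head hab _ ih =>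
    obtain ⟨n, hn⟩ := ih
    exact ⟨n + 1, succ_lt_one hp hab (.inr hn)⟩

theorem exists_bound_lt_one_on_finset (hp : IsStochastic p) (A : Finset X)
    (h : ∀ a ∈ A, ∃ n, avoidProb p x₀ n a < 1) :
    ∃ N c, c < 1 ∧ ∀ a ∈ A, avoidProb p x₀ N a ≤ c := by
  choose! n hn using h
  refine ⟨A.sup n, A.sup fun a => avoidProb p x₀ (A.sup n) a, ?_, fun a ha => Finset.le_sup ha⟩
  refine (Finset.sup_lt_iff (by simp)).2 fun a ha => ?_
  exact (antitone hp a (Finset.le_sup ha)).trans_lt (hn a ha)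

theorem succ_le_of_le_on (hp : IsStochastic p) {A : Finset X} {N : ℕ} {c : ℝ≥0∞} (hc : c ≤ 1)
    (hA : ∀ a ∈ A, avoidProb p x₀ N a ≤ c) (z : X) :
    avoidProb p x₀ (N + 1) z
      ≤ c + (1 - c) * ∑' w, ENNReal.ofReal (if w ∈ A then 0 else p z w) := by
  have hbound : ∀ w, avoidProb p x₀ N w ≤ c + (1 - c) * (if w ∈ A then 0 else 1) := fun w => by
    split_ifs with hw
    · simpa using hA w hw
    · simpa [add_tsub_cancel_of_le hc] using le_one hp N w
  calc avoidProb p x₀ (N + 1) z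
      ≤ ∑' w, ENNReal.ofReal (p z w) * (c + (1 - c) * (if w ∈ A then 0 else 1)) := by
        refine ENNReal.tsum_le_tsum fun w => ?_
        by_cases hw : w = x₀
        · rw [if_pos hw]; exact zero_le
        · rw [if_neg hw]; exact mul_le_mul_right (hbound w) _
    _ = c * ∑' w, ENNReal.ofReal (p z w)
          + (1 - c) * ∑' w, ENNReal.ofReal (if w ∈ A then 0 else p z w) := by
        rw [← ENNReal.tsum_mul_left, ← ENNReal.tsum_mul_left, ← ENNReal.tsum_add]
        congr 1 with w
        split_ifs <;> simp [mul_add, mul_comm]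
    _ = c + (1 - c) * ∑' w, ENNReal.ofReal (if w ∈ A then 0 else p z w) := by
        rw [hp.tsum_ofReal_eq_one, mul_one]

theorem add_le_mul {m : ℕ} {c : ℝ≥0∞} (hc : ∀ w, avoidProb p x₀ m w ≤ c) (k : ℕ) (z : X) :
    avoidProb p x₀ (k + m) z ≤ c * avoidProb p x₀ k z := by
  induction k generalizing z with
  | zero => simpa [avoidProb] using hc z
  | succ k ih =>
    rw [Nat.add_right_comm, avoidProb, avoidProb, ← ENNReal.tsum_mul_left]
    refine ENNReal.tsum_le_tsum fun w => ?_
    split_ifs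
    · simp
    · calc ENNReal.ofReal (p z w) * avoidProb p x₀ (k + m) w
          ≤ ENNReal.ofReal (p z w) * (c * avoidProb p x₀ k w) := mul_le_mul_right (ih w) _
        _ = c * (ENNReal.ofReal (p z w) * avoidProb p x₀ k w) := mul_left_comm _ _ _

theorem mul_le_pow {m : ℕ} {c : ℝ≥0∞} (hc : ∀ w, avoidProb p x₀ m w ≤ c) (k : ℕ) (z : X) :
    avoidProb p x₀ (k * m) z ≤ c ^ k := by
  induction k with
  | zero => simp [avoidProb]
  | succ k ih =>
    calc avoidProb p x₀ ((k + 1) * m) z = avoidProb p x₀ (k * m + m) z := by rw [Nat.succ_mul]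
      _ ≤ c * avoidProb p x₀ (k * m) z := add_le_mul hc _ z
      _ ≤ c * c ^ k := mul_le_mul_right ih c
      _ = c ^ (k + 1) := (pow_succ' c k).symm

theorem le_pow_div (hp : IsStochastic p) {M : ℕ} {c : ℝ≥0∞}
    (hc : ∀ w, avoidProb p x₀ M w ≤ c) (n : ℕ) (z : X) : avoidProb p x₀ n z ≤ c ^ (n / M) :=
  (antitone hp z (Nat.div_mul_le_self n M)).trans (mul_le_pow hc _ z)

end avoidProb

theorem fret_nonneg (hp : IsStochastic p) (n : ℕ) (z y : X) : 0 ≤ fret p n z y := by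
  induction n using Nat.strong_induction_on generalizing z with
  | _ n ih =>
    match n with
    | 0 => exact le_rfl
    | 1 => exact hp.1 z y
    | n + 2 =>
      refine tsum_nonneg fun w => ?_
      split_ifs
      · exact le_rfl
      · exact mul_nonneg (hp.1 z w) (ih (n + 1) (by omega) w)

theorem ofReal_fret_succ_le_avoidProb (hp : IsStochastic p) (n : ℕ) (z : X) :
    ENNReal.ofReal (fret p (n + 1) z x₀) ≤ avoidProb p x₀ n z := by
  induction n generalizing z with
  | zero =>
    exact (ENNReal.le_tsum (f := fun y => ENNReal.ofReal (p z y)) x₀).trans_eq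
      (hp.tsum_ofReal_eq_one z)
  | succ n ih =>
    rw [fret, avoidProb]
    refine (ENNReal.ofReal_tsum_le fun w => ?_).trans (ENNReal.tsum_le_tsum fun w => ?_)
    · split_ifs
      · exact le_rfl
      · exact mul_nonneg (hp.1 z w) (fret_nonneg hp _ w x₀)
    split_ifs
    · simp
    · rw [ENNReal.ofReal_mul (hp.1 z w)]
      exact mul_le_mul_right (ih w) _

theorem exists_fret_le_geometric (hp : IsStochastic p) {M : ℕ} (hM : 0 < M) {r : ℝ≥0∞}
    (hr0 : r ≠ 0) (hr1 : r < 1) (h : ∀ w, avoidProb p x₀ M w ≤ r) (z : X) :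
    ∃ C ρ : ℝ, 0 ≤ ρ ∧ ρ < 1 ∧ ∀ n, fret p n z x₀ ≤ C * ρ ^ n := by
  have hr0' : 0 < r.toReal := ENNReal.toReal_pos hr0 hr1.ne_top
  obtain ⟨ρ, hρ0, hρ1, hρ⟩ :=
    exists_pow_div_le_mul_pow hr0' (ENNReal.toReal_lt_of_lt_ofReal (by simpa using hr1)) hM
  refine ⟨r.toReal⁻¹, ρ, hρ0, hρ1, fun n => ?_⟩
  cases n with
  | zero => simp only [fret, pow_zero, mul_one]; positivity
  | succ n =>
    have havoid_ne_top : avoidProb p x₀ n z ≠ ∞ :=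
      ne_top_of_le_ne_top ENNReal.one_ne_top (avoidProb.le_one hp n z)
    calc fret p (n + 1) z x₀ ≤ (avoidProb p x₀ n z).toReal :=
          (ENNReal.ofReal_le_iff_le_toReal havoid_ne_top).1 (ofReal_fret_succ_le_avoidProb hp n z)
      _ ≤ (r ^ (n / M)).toReal :=
          ENNReal.toReal_mono (ENNReal.pow_ne_top hr1.ne_top) (avoidProb.le_pow_div hp h n z)
      _ = r.toReal ^ (n / M) := ENNReal.toReal_pow _ _
      _ ≤ r.toReal⁻¹ * ρ ^ (n + 1) := hρ n

end

theorem condition_implies_positive_recurrent_general {X : Type*}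
    (p : X → X → ℝ) (hp : IsStochastic p)
    (hirr : ∀ x y : X, ∃ n : ℕ, 0 < matPow p n x y)
    (ε : ℝ) (hε : ε ∈ Set.Ioo (0 : ℝ) 1) (A : Finset X)
    (hA : ∀ x, ∑' y, (if y ∈ A then 0 else p x y) < ε) :
    ∀ x : X, Summable (fun n : ℕ => (n : ℝ) * fret p n x x) := by
  intro x
  obtain ⟨N, c, hc1, hcA⟩ := avoidProb.exists_bound_lt_one_on_finset hp A fun a _ =>
    avoidProb.exists_lt_one_of_transGen hp (hp.transGen_of_irreducible hirr a x)
  have hstep : ∀ z, avoidProb p x (N + 1) z ≤ c + (1 - c) * ENNReal.ofReal ε := fun z => by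
    refine (avoidProb.succ_le_of_le_on hp hc1.le hcA z).trans ?_
    rw [hp.tsum_ofReal_ite_eq]
    gcongr
    exact (hA z).le
  have hr0 : c + (1 - c) * ENNReal.ofReal ε ≠ 0 :=
    (ENNReal.mul_pos (tsub_pos_of_lt hc1).ne' (ENNReal.ofReal_pos.2 hε.1).ne').trans_le
      le_add_self |>.ne'
  obtain ⟨C, ρ, hρ0, hρ1, hfret⟩ := exists_fret_le_geometric hp N.succ_pos hr0
    (ENNReal.add_tsub_mul_lt_one hc1 (ENNReal.ofReal_lt_one.2 hε.2)) hstep x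
  refine .of_nonneg_of_le (fun n => mul_nonneg n.cast_nonneg (fret_nonneg hp n x x))
    (fun n => ?_) ((summable_pow_mul_geometric_of_norm_lt_one 1 (r := ρ) ?_).mul_left C)
  · calc (n : ℝ) * fret p n x x ≤ n * (C * ρ ^ n) := by gcongr; exact hfret n
      _ = C * ((n : ℝ) ^ 1 * ρ ^ n) := by ring
  · rwa [Real.norm_of_nonneg hρ0]

/-- if there are `ε ∈ (0,1)` and a finite `A` with
`sup_x ∑_{y ∉ A} p(x,y) < ε`, the irreducible chain is positive recurrent. -/
theorem condition_implies_positive_recurrent {X : Type*} [Countable X]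
    (p : X → X → ℝ) (hp : IsStochastic p)
    (hirr : ∀ x y : X, ∃ n : ℕ, 0 < matPow p n x y)
    (ε : ℝ) (hε : ε ∈ Set.Ioo (0 : ℝ) 1) (A : Finset X)
    (hA : ∀ x, ∑' y, (if y ∈ A then 0 else p x y) < ε) :
    ∀ x : X, Summable (fun n : ℕ => (n : ℝ) * fret p n x x) :=
  condition_implies_positive_recurrent_general p hp hirr ε hε A hA
end
end

section
/- Let (X,P) be an irreducible Markov chain on a countable state space, and suppose there exist ε ∈ (0,1) and a finite nonempty subset A ⊂ X with sup_{x∈X} Σ_{y∈X∖A} p(x,y) < ε. Then min_{x∈A} τ̄_x ≤ card(A)/(1−ε), where τ̄_x = Σ_{n≥1} n f^{(n)}(x,x) is the mean return time to x. -/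
open scoped Classical ENNReal

noncomputable section

/-!
For `x ∈ A` let `occ x y` be the expected number of visits to `y` before the chain started at `x`
returns to `x`. It is the minimal excessive measure with `occ x x = 1`, hence
`occ a b * occ b c ≤ occ a c`, and as `A` is finite some `x ∈ A` has `occ x y ≤ 1` for all `y ∈ A`.
The mean return time to `x` is at most `∑ₙ Pₓ(no return to x by time n) = ∑_y occ x y`. At each
step the mass outside `A` is at most `ε` times the total mass one step earlier, so
`∑_y occ x y ≤ ∑_{y ∈ A} occ x y + ε ∑_y occ x y ≤ #A + ε ∑_y occ x y`.
Kernels take values in `ℝ≥0∞`, which removes all summability side conditions.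
-/

open Finset

lemma Finset.Nonempty.exists_mem_forall_le_one_of_mul_le {X M : Type*} [MulOneClass M]
    [LinearOrder M] [MulLeftMono M] {A : Finset X} (hA : A.Nonempty) (m : X → X → M)
    (hdiag : ∀ a, m a a ≤ 1) (hmul : ∀ a b c, m a b * m b c ≤ m a c) :
    ∃ x ∈ A, ∀ y ∈ A, m x y ≤ 1 := by
  -- `1 < m a b` is a strict order on `A`; a maximal element has the required row.
  let r : A → A → Prop := fun b a => 1 < m a b
  have : IsTrans A r :=
    ⟨fun c b a hcb hba => (one_lt_mul_of_lt_of_le' hba hcb.le).trans_le (hmul _ _ _)⟩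
  have : Std.Irrefl r := ⟨fun a h => (hdiag a).not_gt h⟩
  obtain ⟨a, ha⟩ := hA
  obtain ⟨x, -, hx⟩ := (Finite.wellFounded_of_trans_of_irrefl r).has_min Set.univ
    ⟨⟨a, ha⟩, trivial⟩
  exact ⟨x, x.2, fun y hy => not_lt.1 (hx ⟨y, hy⟩ trivial)⟩

lemma ENNReal.le_div_one_sub_of_le_add_mul {a b c : ℝ≥0∞} (ha : a ≠ ∞) (hc : c < 1)
    (h : a ≤ b + c * a) : a ≤ b / (1 - c) := by
  rw [ENNReal.le_div_iff_mul_le (Or.inl (tsub_pos_of_lt hc).ne')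
    (Or.inl (ENNReal.sub_ne_top ENNReal.one_ne_top)), ENNReal.mul_sub fun _ _ => ha, mul_one,
    tsub_le_iff_right, mul_comm]
  exact h

lemma ENNReal.tsum_le_ofReal_of_tsum_toReal_le {α : Type*} {f : α → ℝ≥0∞} {b : ℝ}
    (hf : ∑' a, f a ≠ ∞) (h : ∑' a, (f a).toReal ≤ b) : ∑' a, f a ≤ ENNReal.ofReal b := by
  rw [← ENNReal.ofReal_toReal hf, ENNReal.tsum_toReal_eq (ENNReal.ne_top_of_tsum_ne_top hf)]
  exact ENNReal.ofReal_le_ofReal h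

namespace MarkovChain

variable {X : Type*} (q : X → X → ℝ≥0∞)

/-- Weight of the `n`-step paths from `w` to `y` that avoid `t` at times `1, …, n`. -/
def taboo (t w : X) : ℕ → X → ℝ≥0∞
  | 0 => fun y => if y = w then 1 else 0
  | n + 1 => fun y => if y = t then 0 else ∑' z, taboo t w n z * q z y

/-- From `w`, the probability that the first visit to `t` after time `0` is at time `n + 1`. -/
def hitProb (t w : X) (n : ℕ) : ℝ≥0∞ := ∑' z, taboo q t w n z * q z t

def avoidProb (t w : X) (n : ℕ) : ℝ≥0∞ := ∑' y, taboo q t w n y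

@[simp]
lemma taboo_zero (t w y : X) : taboo q t w 0 y = if y = w then 1 else 0 := rfl

@[simp]
lemma taboo_succ_self (t w : X) (n : ℕ) : taboo q t w (n + 1) t = 0 := if_pos rfl

lemma taboo_succ_of_ne {t y : X} (hy : y ≠ t) (w : X) (n : ℕ) :
    taboo q t w (n + 1) y = ∑' z, taboo q t w n z * q z y := if_neg hy

lemma taboo_succ_le (t w : X) (n : ℕ) (y : X) :
    taboo q t w (n + 1) y ≤ ∑' z, taboo q t w n z * q z y := by
  by_cases hy : y = t
  · simp [hy]
  · exact (taboo_succ_of_ne q hy w n).le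

lemma taboo_succ_eq_tsum_front (t : X) (n : ℕ) (w y : X) :
    taboo q t w (n + 1) y = ∑' z, if z = t then 0 else q w z * taboo q t z n y := by
  induction n generalizing w y with
  | zero =>
    rw [tsum_eq_single y fun z hz => by simp [Ne.symm hz]]
    by_cases hy : y = t
    · simp [hy]
    · rw [taboo_succ_of_ne q hy, tsum_eq_single w fun z hz => by simp [hz]]
      simp [hy]
  | succ n ih =>
    by_cases hy : y = t
    · simp [hy]
    · simp only [taboo_succ_of_ne q hy, ih, ← ENNReal.tsum_mul_right]
      rw [ENNReal.tsum_comm]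
      refine tsum_congr fun z => ?_
      split_ifs
      · simp
      · rw [← ENNReal.tsum_mul_left]
        exact tsum_congr fun u => by ring

lemma hitProb_succ (t w : X) (n : ℕ) :
    hitProb q t w (n + 1) = ∑' z, if z = t then 0 else q w z * hitProb q t z n := by
  simp only [hitProb, taboo_succ_eq_tsum_front, ← ENNReal.tsum_mul_right]
  rw [ENNReal.tsum_comm]
  refine tsum_congr fun z => ?_
  split_ifs
  · simp
  · rw [← ENNReal.tsum_mul_left]
    exact tsum_congr fun u => by ring

@[simp]
lemma avoidProb_zero (t w : X) : avoidProb q t w 0 = 1 := by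
  simp [avoidProb]

lemma hitProb_add_avoidProb_succ_le (hq : ∀ z, ∑' y, q z y ≤ 1) (t w : X) (n : ℕ) :
    hitProb q t w n + avoidProb q t w (n + 1) ≤ avoidProb q t w n := by
  have hz : ∀ z, taboo q t w n z * q z t
      + ∑' y, (if y = t then 0 else taboo q t w n z * q z y) ≤ taboo q t w n z := fun z =>
    calc _ = taboo q t w n z * ∑' y, q z y := by
          rw [ENNReal.tsum_eq_add_tsum_ite (f := q z) t, mul_add, ← ENNReal.tsum_mul_left]
          simp only [mul_ite, mul_zero]
      _ ≤ taboo q t w n z := mul_le_of_le_one_right' (hq z)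
  have havoid : avoidProb q t w (n + 1)
      = ∑' z, ∑' y, (if y = t then 0 else taboo q t w n z * q z y) := by
    rw [avoidProb, ENNReal.tsum_comm]
    refine tsum_congr fun y => ?_
    split_ifs with hy
    · simp [hy]
    · exact taboo_succ_of_ne q hy w n
  rw [hitProb, havoid, ← ENNReal.tsum_add]
  exact ENNReal.tsum_le_tsum hz

lemma sum_Ico_hitProb_add_avoidProb_le (hq : ∀ z, ∑' y, q z y ≤ 1) (t w : X) {k N : ℕ}
    (hkN : k ≤ N) :
    ∑ n ∈ Ico k N, hitProb q t w n + avoidProb q t w N ≤ avoidProb q t w k := by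
  induction N, hkN using Nat.le_induction with
  | base => simp
  | succ N hkN ih =>
    rw [sum_Ico_succ_top hkN, add_assoc]
    exact (add_le_add le_rfl (hitProb_add_avoidProb_succ_le q hq t w N)).trans ih

lemma avoidProb_le_one (hq : ∀ z, ∑' y, q z y ≤ 1) (t w : X) (n : ℕ) :
    avoidProb q t w n ≤ 1 := by
  simpa using le_add_self.trans (sum_Ico_hitProb_add_avoidProb_le q hq t w n.zero_le)

lemma hitProb_le_one (hq : ∀ z, ∑' y, q z y ≤ 1) (t w : X) (n : ℕ) :
    hitProb q t w n ≤ 1 :=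
  le_self_add.trans <| (hitProb_add_avoidProb_succ_le q hq t w n).trans <|
    avoidProb_le_one q hq t w n

lemma tsum_hitProb_le_one (hq : ∀ z, ∑' y, q z y ≤ 1) (t w : X) :
    ∑' n, hitProb q t w n ≤ 1 :=
  ENNReal.tsum_le_of_sum_range_le fun N => by
    rw [range_eq_Ico, ← avoidProb_zero q t w]
    exact le_self_add.trans (sum_Ico_hitProb_add_avoidProb_le q hq t w N.zero_le)

lemma tsum_succ_mul_hitProb_le (hq : ∀ z, ∑' y, q z y ≤ 1) (t w : X) :
    ∑' n : ℕ, ((n : ℝ≥0∞) + 1) * hitProb q t w n ≤ ∑' n, avoidProb q t w n :=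
  ENNReal.tsum_le_of_sum_range_le fun N =>
    calc ∑ n ∈ range N, ((n : ℝ≥0∞) + 1) * hitProb q t w n
        = ∑ k ∈ range N, ∑ n ∈ Ico k N, hitProb q t w n := by
          rw [range_eq_Ico, sum_Ico_Ico_comm]
          simp [add_mul]
      _ ≤ ∑ k ∈ range N, avoidProb q t w k := sum_le_sum fun k hk =>
          le_self_add.trans (sum_Ico_hitProb_add_avoidProb_le q hq t w (mem_range.1 hk).le)
      _ ≤ ∑' n, avoidProb q t w n := ENNReal.sum_le_tsum _

/-- Expected number of visits to `y` before the first return to `t`, starting from `t`. -/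
def occ (t y : X) : ℝ≥0∞ := ∑' n, taboo q t t n y

@[simp]
lemma occ_self (t : X) : occ q t t = 1 := by
  rw [occ, tsum_eq_zero_add' ENNReal.summable]
  simp

lemma tsum_occ_mul_le (hq : ∀ z, ∑' y, q z y ≤ 1) (t w : X) :
    ∑' z, occ q t z * q z w ≤ occ q t w := by
  have hswap : ∑' z, occ q t z * q z w = ∑' n, ∑' z, taboo q t t n z * q z w := by
    simp only [occ, ← ENNReal.tsum_mul_right]
    exact ENNReal.tsum_comm
  rw [hswap]
  by_cases hw : w = t
  · subst hw
    exact (tsum_hitProb_le_one q hq w w).trans_eq (occ_self q w).symm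
  · simp only [← taboo_succ_of_ne q hw, occ, tsum_eq_zero_add' (f := fun n => taboo q t t n w)
      ENNReal.summable]
    exact le_add_self

lemma mul_occ_le_of_excessive (ν : X → ℝ≥0∞) (hν : ∀ w, ∑' z, ν z * q z w ≤ ν w) (t y : X) :
    ν t * occ q t y ≤ ν y := by
  suffices h : ∀ N y, ν t * ∑ n ∈ range N, taboo q t t n y ≤ ν y by
    rw [occ, ENNReal.tsum_eq_iSup_nat, ENNReal.mul_iSup]
    exact iSup_le fun N => h N y
  intro N
  induction N with
  | zero => simp
  | succ N ih =>
    intro y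
    rw [sum_range_succ']
    by_cases hy : y = t
    · subst hy
      simp
    · calc ν t * (∑ n ∈ range N, taboo q t t (n + 1) y + taboo q t t 0 y)
          = ∑' z, (ν t * ∑ n ∈ range N, taboo q t t n z) * q z y := by
            simp only [taboo_succ_of_ne q hy, taboo_zero, if_neg hy, add_zero, sum_mul,
              ← Summable.tsum_finsetSum fun _ _ => ENNReal.summable, ← ENNReal.tsum_mul_left,
              mul_sum, mul_assoc]
        _ ≤ ∑' z, ν z * q z y := ENNReal.tsum_le_tsum fun z => mul_le_mul_left (ih z) _
        _ ≤ ν y := hν y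

lemma occ_mul_occ_le (hq : ∀ z, ∑' y, q z y ≤ 1) (a b c : X) :
    occ q a b * occ q b c ≤ occ q a c :=
  mul_occ_le_of_excessive q (occ q a) (tsum_occ_mul_le q hq a) b c

lemma avoidProb_succ_le {A : Finset X} {ε : ℝ≥0∞}
    (hA : ∀ z, ∑' y, (if y ∈ A then 0 else q z y) ≤ ε) (t w : X) (n : ℕ) :
    avoidProb q t w (n + 1) ≤ ∑ y ∈ A, taboo q t w (n + 1) y + ε * avoidProb q t w n := by
  have hsplit : ∀ y, taboo q t w (n + 1) y = (if y ∈ A then taboo q t w (n + 1) y else 0)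
      + (if y ∈ A then 0 else taboo q t w (n + 1) y) := fun y => by split_ifs <;> simp
  have hout : ∑' y, (if y ∈ A then 0 else taboo q t w (n + 1) y) ≤ ε * avoidProb q t w n :=
    calc _ ≤ ∑' y, ∑' z, (if y ∈ A then 0 else taboo q t w n z * q z y) :=
          ENNReal.tsum_le_tsum fun y => by
            split_ifs
            · simp
            · exact taboo_succ_le q t w n y
      _ = ∑' z, taboo q t w n z * ∑' y, (if y ∈ A then 0 else q z y) := by
          rw [ENNReal.tsum_comm]
          simp only [← ENNReal.tsum_mul_left, mul_ite, mul_zero]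
      _ ≤ ∑' z, taboo q t w n z * ε := ENNReal.tsum_le_tsum fun z => mul_le_mul_right (hA z) _
      _ = ε * avoidProb q t w n := by rw [ENNReal.tsum_mul_right, mul_comm, avoidProb]
  rw [avoidProb, tsum_congr hsplit, ENNReal.tsum_add, tsum_eq_sum (s := A) fun y hy => if_neg hy,
    sum_congr rfl fun y hy => if_pos hy]
  exact add_le_add le_rfl hout

lemma tsum_avoidProb_le_div (hq : ∀ z, ∑' y, q z y ≤ 1) {A : Finset X} {ε : ℝ≥0∞}
    (hA : ∀ z, ∑' y, (if y ∈ A then 0 else q z y) ≤ ε) (hε : ε < 1) (t : X) {w : X}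
    (hw : w ∈ A) :
    ∑' n, avoidProb q t w n ≤ (∑ y ∈ A, ∑' n, taboo q t w n y) / (1 - ε) := by
  set S := ∑ y ∈ A, ∑' n, taboo q t w n y
  have hstep : ∀ N, ∑ n ∈ range (N + 1), avoidProb q t w n
      ≤ S + ε * ∑ n ∈ range N, avoidProb q t w n := fun N =>
    calc ∑ n ∈ range (N + 1), avoidProb q t w n
        = ∑ n ∈ range N, avoidProb q t w (n + 1) + ∑ y ∈ A, taboo q t w 0 y := by
          simp [sum_range_succ', hw]
      _ ≤ ∑ n ∈ range N, (∑ y ∈ A, taboo q t w (n + 1) y + ε * avoidProb q t w n)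
            + ∑ y ∈ A, taboo q t w 0 y :=
          add_le_add (sum_le_sum fun n _ => avoidProb_succ_le q hA t w n) le_rfl
      _ = ∑ y ∈ A, ∑ n ∈ range (N + 1), taboo q t w n y
            + ε * ∑ n ∈ range N, avoidProb q t w n := by
          rw [sum_add_distrib, sum_comm (s := A), sum_range_succ', ← mul_sum]
          ring
      _ ≤ S + ε * ∑ n ∈ range N, avoidProb q t w n :=
          add_le_add (sum_le_sum fun y _ => ENNReal.sum_le_tsum _) le_rfl
  refine ENNReal.tsum_le_of_sum_range_le fun N => ENNReal.le_div_one_sub_of_le_add_mul ?_ hε ?_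
  · exact ENNReal.sum_ne_top.2 fun n _ => ne_top_of_le_ne_top ENNReal.one_ne_top
      (avoidProb_le_one q hq t w n)
  · exact (sum_le_sum_of_subset (range_subset_range.2 N.le_succ)).trans (hstep N)

theorem exists_mem_tsum_succ_mul_hitProb_le (hq : ∀ z, ∑' y, q z y ≤ 1) {A : Finset X}
    (hAne : A.Nonempty) {ε : ℝ≥0∞} (hA : ∀ z, ∑' y, (if y ∈ A then 0 else q z y) ≤ ε)
    (hε : ε < 1) :
    ∃ x ∈ A, ∑' n : ℕ, ((n : ℝ≥0∞) + 1) * hitProb q x x n ≤ #A / (1 - ε) := by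
  obtain ⟨x, hxA, hx⟩ := hAne.exists_mem_forall_le_one_of_mul_le (occ q)
    (fun a => (occ_self q a).le) (occ_mul_occ_le q hq)
  refine ⟨x, hxA, ?_⟩
  calc _ ≤ ∑' n, avoidProb q x x n := tsum_succ_mul_hitProb_le q hq x x
    _ ≤ (∑ y ∈ A, occ q x y) / (1 - ε) := tsum_avoidProb_le_div q hq hA hε x hxA
    _ ≤ #A / (1 - ε) := by
        gcongr
        simpa using sum_le_card_nsmul A _ 1 hx

lemma fret_toReal_succ (hq : ∀ z, ∑' y, q z y ≤ 1) (t : X) (n : ℕ) (w : X) :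
    fret (fun a b => (q a b).toReal) (n + 1) w t = (hitProb q t w n).toReal := by
  induction n generalizing w with
  | zero => simp [fret, hitProb]
  | succ n ih =>
    have hfin : ∀ z, (if z = t then 0 else q w z * hitProb q t z n) ≠ ∞ := fun z => by
      split_ifs
      · exact ENNReal.zero_ne_top
      · exact ENNReal.mul_ne_top
          (ne_top_of_le_ne_top ENNReal.one_ne_top ((ENNReal.le_tsum z).trans (hq w)))
          (ne_top_of_le_ne_top ENNReal.one_ne_top (hitProb_le_one q hq t z n))
    rw [hitProb_succ, ENNReal.tsum_toReal_eq hfin, fret]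
    refine tsum_congr fun z => ?_
    split_ifs <;> simp [ih]

lemma tsum_nat_mul_fret_toReal (hq : ∀ z, ∑' y, q z y ≤ 1) (x : X) :
    ∑' n : ℕ, (n : ℝ) * fret (fun a b => (q a b).toReal) n x x
      = (∑' n : ℕ, ((n : ℝ≥0∞) + 1) * hitProb q x x n).toReal := by
  have hsupp : (Function.support fun n : ℕ => (n : ℝ) * fret (fun a b => (q a b).toReal) n x x)
      ⊆ Set.range Nat.succ := fun n hn =>
    Nat.exists_eq_succ_of_ne_zero (by rintro rfl; simp at hn) |>.imp fun k hk => hk.symm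
  rw [← Nat.succ_injective.tsum_eq hsupp, ENNReal.tsum_toReal_eq fun n => ENNReal.mul_ne_top
    (by finiteness) (ne_top_of_le_ne_top ENNReal.one_ne_top (hitProb_le_one q hq x x n))]
  refine tsum_congr fun n => ?_
  simp [fret_toReal_succ q hq, ENNReal.toReal_add (ENNReal.natCast_ne_top n) ENNReal.one_ne_top]

end MarkovChain

theorem min_mean_return_time_bound_general {X : Type*}
    (p : X → X → ℝ) (hp : IsStochastic p)
    (ε : ℝ) (hε : ε ∈ Set.Ioo (0 : ℝ) 1) (A : Finset X) (hAne : A.Nonempty)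
    (hA : ∀ x, ∑' y, (if y ∈ A then 0 else p x y) < ε) :
    ∃ x ∈ A, (∑' n : ℕ, (n : ℝ) * fret p n x x) ≤ (A.card : ℝ) / (1 - ε) := by
  obtain ⟨q, hq, rfl⟩ : ∃ q : X → X → ℝ≥0∞,
      (∀ z, ∑' y, q z y ≤ 1) ∧ p = fun a b => (q a b).toReal :=
    ⟨fun a b => ENNReal.ofReal (p a b),
      fun z => by rw [← ENNReal.ofReal_tsum_of_nonneg (hp.1 z) (hp.2.1 z), hp.2.2 z,
        ENNReal.ofReal_one],
      funext₂ fun a b => (ENNReal.toReal_ofReal (hp.1 a b)).symm⟩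
  have hAq : ∀ z, ∑' y, (if y ∈ A then 0 else q z y) ≤ ENNReal.ofReal ε := fun z =>
    ENNReal.tsum_le_ofReal_of_tsum_toReal_le
      (ne_top_of_le_ne_top ENNReal.one_ne_top
        ((ENNReal.tsum_le_tsum fun y => by split_ifs <;> simp).trans (hq z)))
      (by simpa [apply_ite ENNReal.toReal] using (hA z).le)
  have hε' : ENNReal.ofReal ε < 1 := ENNReal.ofReal_lt_one.2 hε.2
  obtain ⟨x, hxA, hx⟩ := MarkovChain.exists_mem_tsum_succ_mul_hitProb_le q hq hAne hAq hε'
  refine ⟨x, hxA, ?_⟩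
  rw [MarkovChain.tsum_nat_mul_fret_toReal q hq]
  calc _ ≤ ((A.card : ℝ≥0∞) / (1 - ENNReal.ofReal ε)).toReal :=
        ENNReal.toReal_mono (ENNReal.div_ne_top (by simp) (tsub_pos_of_lt hε').ne') hx
    _ = A.card / (1 - ε) := by
        rw [ENNReal.toReal_div, ENNReal.toReal_sub_of_le hε'.le ENNReal.one_ne_top,
          ENNReal.toReal_ofReal hε.1.le]
        simp

/-- under the hypothesis of Theorem 2.2 with `A` nonempty,
`min_{x ∈ A} τ̄ₓ ≤ card(A)/(1-ε)`. -/
theorem min_mean_return_time_bound {X : Type*} [Countable X]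
    (p : X → X → ℝ) (hp : IsStochastic p)
    (hirr : ∀ x y : X, ∃ n : ℕ, 0 < matPow p n x y)
    (ε : ℝ) (hε : ε ∈ Set.Ioo (0 : ℝ) 1) (A : Finset X) (hAne : A.Nonempty)
    (hA : ∀ x, ∑' y, (if y ∈ A then 0 else p x y) < ε) :
    ∃ x ∈ A, (∑' n : ℕ, (n : ℝ) * fret p n x x) ≤ (A.card : ℝ) / (1 - ε) :=
  min_mean_return_time_bound_general p hp ε hε A hAne hA
end
end

section
/- Let (X,P) be a reversible Markov chain on a countable state space with reversibility measure m (i.e., m(x) p(x,y) = m(y) p(y,x) for all x,y, with m(x) > 0). Fix x ∈ X, n ≥ 1, A ⊆ X with m(A) = Σ_{a∈A} m(a) < ∞, and ε ∈ [0,1) such that Σ_{y∈X∖A} p^{(n)}(x,y) ≤ ε. Then p^{(2n)}(x,x) ≥ (1−ε)² m(x)/m(A). -/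
open scoped Classical ENNReal

noncomputable section

section Aux

variable {X : Type*} {p : X → X → ℝ}

lemma matPow_nonneg (hp : IsStochastic p) : ∀ n x y, 0 ≤ matPow p n x y := by
  intro n
  induction n with
  | zero => intro x y; simp only [matPow]; positivity
  | succ k ih =>
      intro x y
      exact tsum_nonneg fun z => mul_nonneg (ih x z) (hp.1 z y)

/-- Key swap lemma for nonnegative kernels. -/
lemma kernel_swap (g : X → ℝ) (hg0 : ∀ z, 0 ≤ g z) (hgs : Summable g)
    (k : X → X → ℝ) (hk0 : ∀ z y, 0 ≤ k z y) (hks : ∀ z, Summable (k z))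
    (hk1 : ∀ z, ∑' y, k z y ≤ 1) :
    (Summable fun y => ∑' z, g z * k z y) ∧ (∀ y, Summable fun z => g z * k z y) ∧
      (∑' z, ∑' y, g z * k z y = ∑' y, ∑' z, g z * k z y) := by
  set F : X × X → ℝ := fun q => g q.1 * k q.1 q.2 with hF
  have hF0 : 0 ≤ F := fun q => mul_nonneg (hg0 _) (hk0 _ _)
  have hcol : ∀ z, (∑' y, g z * k z y) = g z * ∑' y, k z y := fun z =>
    (hks z).tsum_mul_left (g z)
  have hFs : Summable F := by
    rw [summable_prod_of_nonneg hF0]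
    constructor
    · intro z; exact (hks z).mul_left (g z)
    · apply Summable.of_nonneg_of_le
        (fun z => tsum_nonneg fun y => mul_nonneg (hg0 z) (hk0 z y))
        (fun z => ?_) hgs
      rw [hcol z]
      calc g z * ∑' y, k z y ≤ g z * 1 :=
            mul_le_mul_of_nonneg_left (hk1 z) (hg0 z)
        _ = g z := mul_one _
  have hswap : Summable fun q : X × X => F q.swap := hFs.prod_symm
  have h2 := (summable_prod_of_nonneg (f := fun q : X × X => F q.swap)
      (fun q => hF0 q.swap)).mp hswap
  refine ⟨h2.2, fun y => h2.1 y, ?_⟩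
  exact Summable.tsum_comm' (f := fun y z => g z * k z y) hswap (fun y => h2.1 y)
    (fun z => (hks z).mul_left (g z))

lemma matPow_summable (hp : IsStochastic p) : ∀ n x,
    Summable (matPow p n x) ∧ ∑' y, matPow p n x y = 1 := by
  intro n
  induction n with
  | zero =>
      intro x
      have hs : Summable (matPow p 0 x) := by
        apply summable_of_ne_finset_zero (s := {x})
        intro y hy
        simp only [Finset.mem_singleton] at hy
        simp [matPow, Ne.symm hy]
      refine ⟨hs, ?_⟩
      rw [tsum_eq_single x (fun y hy => by simp [matPow, Ne.symm hy])]
      simp [matPow]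
  | succ k ih =>
      intro x
      obtain ⟨hs, h1⟩ := ih x
      obtain ⟨hsum, _, hswap⟩ := kernel_swap (matPow p k x) (fun z => matPow_nonneg hp k x z)
        hs p (fun z y => hp.1 z y) (fun z => hp.2.1 z) (fun z => le_of_eq (hp.2.2 z))
      refine ⟨hsum, ?_⟩
      show ∑' y, ∑' z, matPow p k x z * p z y = 1
      rw [← hswap]
      calc ∑' z, ∑' y, matPow p k x z * p z y
          = ∑' z, matPow p k x z * ∑' y, p z y :=
            tsum_congr fun z => (hp.2.1 z).tsum_mul_left _
        _ = ∑' z, matPow p k x z := by simp [hp.2.2]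
        _ = 1 := h1

lemma matPow_le_one (hp : IsStochastic p) (n : ℕ) (x y : X) : matPow p n x y ≤ 1 := by
  obtain ⟨hs, h1⟩ := matPow_summable hp n x
  calc matPow p n x y ≤ ∑' z, matPow p n x z :=
        Summable.le_tsum hs y fun z _ => matPow_nonneg hp n x z
    _ = 1 := h1

lemma matPow_chapman (hp : IsStochastic p) (a b : ℕ) (x y : X) :
    matPow p (a + b) x y = ∑' z, matPow p a x z * matPow p b z y := by
  induction b generalizing y with
  | zero =>
      rw [Nat.add_zero, tsum_eq_single y (fun z hz => by simp [matPow, hz])]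
      simp [matPow]
  | succ c ih =>
      have key := kernel_swap (matPow p a x) (fun z => matPow_nonneg hp a x z)
        (matPow_summable hp a x).1 (fun z w => matPow p c z w * p w y)
        (fun z w => mul_nonneg (matPow_nonneg hp c z w) (hp.1 w y))
        (fun z => Summable.of_nonneg_of_le
          (fun w => mul_nonneg (matPow_nonneg hp c z w) (hp.1 w y))
          (fun w => by
            calc matPow p c z w * p w y ≤ matPow p c z w * 1 :=
                  mul_le_mul_of_nonneg_left (by
                    calc p w y ≤ ∑' u, p w u := Summable.le_tsum (hp.2.1 w) y fun u _ => hp.1 w u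
                      _ = 1 := hp.2.2 w) (matPow_nonneg hp c z w)
              _ = matPow p c z w := mul_one _)
          (matPow_summable hp c z).1)
        (fun z => by
          calc (∑' w, matPow p c z w * p w y) ≤ ∑' w, matPow p c z w := by
                apply Summable.tsum_le_tsum _ _ (matPow_summable hp c z).1
                · intro w
                  calc matPow p c z w * p w y ≤ matPow p c z w * 1 :=
                        mul_le_mul_of_nonneg_left (by
                          calc p w y ≤ ∑' u, p w u := Summable.le_tsum (hp.2.1 w) y fun u _ => hp.1 w u
                            _ = 1 := hp.2.2 w) (matPow_nonneg hp c z w)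
                    _ = matPow p c z w := mul_one _
                · exact Summable.of_nonneg_of_le
                    (fun w => mul_nonneg (matPow_nonneg hp c z w) (hp.1 w y))
                    (fun w => by
                      calc matPow p c z w * p w y ≤ matPow p c z w * 1 :=
                            mul_le_mul_of_nonneg_left (by
                              calc p w y ≤ ∑' u, p w u :=
                                    Summable.le_tsum (hp.2.1 w) y fun u _ => hp.1 w u
                                _ = 1 := hp.2.2 w) (matPow_nonneg hp c z w)
                        _ = matPow p c z w := mul_one _)
                    (matPow_summable hp c z).1
            _ = 1 := (matPow_summable hp c z).2)
      obtain ⟨_, _, hswap⟩ := key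
      calc matPow p (a + (c + 1)) x y = matPow p ((a + c) + 1) x y := by ring_nf
        _ = ∑' w, matPow p (a + c) x w * p w y := rfl
        _ = ∑' w, (∑' z, matPow p a x z * matPow p c z w) * p w y := by
            refine tsum_congr fun w => ?_; rw [ih]
        _ = ∑' w, ∑' z, matPow p a x z * (matPow p c z w * p w y) := by
            refine tsum_congr fun w => ?_
            rw [← tsum_mul_right]
            exact tsum_congr fun z => by ring
        _ = ∑' z, ∑' w, matPow p a x z * (matPow p c z w * p w y) := hswap.symm
        _ = ∑' z, matPow p a x z * ∑' w, matPow p c z w * p w y := by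
            refine tsum_congr fun z => ?_
            exact Summable.tsum_mul_left _ (Summable.of_nonneg_of_le
              (fun w => mul_nonneg (matPow_nonneg hp c z w) (hp.1 w y))
              (fun w => by
                calc matPow p c z w * p w y ≤ matPow p c z w * 1 :=
                      mul_le_mul_of_nonneg_left (by
                        calc p w y ≤ ∑' u, p w u := Summable.le_tsum (hp.2.1 w) y fun u _ => hp.1 w u
                          _ = 1 := hp.2.2 w) (matPow_nonneg hp c z w)
                  _ = matPow p c z w := mul_one _)
              (matPow_summable hp c z).1)
        _ = ∑' z, matPow p a x z * matPow p (c + 1) z y := rfl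

lemma matPow_one (hp : IsStochastic p) (x y : X) : matPow p 1 x y = p x y := by
  show (∑' z, matPow p 0 x z * p z y) = p x y
  rw [tsum_eq_single x (fun z hz => by simp [matPow, Ne.symm hz])]
  simp [matPow]

lemma matPow_rev (hp : IsStochastic p) (m : X → ℝ)
    (hrev : ∀ x y, m x * p x y = m y * p y x) :
    ∀ n x y, m x * matPow p n x y = m y * matPow p n y x := by
  intro n
  induction n with
  | zero =>
      intro x y
      by_cases hxy : x = y
      · subst hxy; rfl
      · simp [matPow, hxy, Ne.symm hxy]
  | succ k ih =>
      intro x y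
      have hsumm : Summable fun z => matPow p k x z * p z y :=
        Summable.of_nonneg_of_le (fun z => mul_nonneg (matPow_nonneg hp k x z) (hp.1 z y))
          (fun z => by
            calc matPow p k x z * p z y ≤ matPow p k x z * 1 :=
                  mul_le_mul_of_nonneg_left (by
                    calc p z y ≤ ∑' u, p z u := Summable.le_tsum (hp.2.1 z) y fun u _ => hp.1 z u
                      _ = 1 := hp.2.2 z) (matPow_nonneg hp k x z)
              _ = matPow p k x z := mul_one _)
          (matPow_summable hp k x).1
      have hsumm2 : Summable fun z => p y z * matPow p k z x :=
        Summable.of_nonneg_of_le (fun z => mul_nonneg (hp.1 y z) (matPow_nonneg hp k z x))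
          (fun z => by
            calc p y z * matPow p k z x ≤ p y z * 1 :=
                  mul_le_mul_of_nonneg_left (matPow_le_one hp k z x) (hp.1 y z)
              _ = p y z := mul_one _)
          (hp.2.1 y)
      calc m x * matPow p (k + 1) x y = m x * ∑' z, matPow p k x z * p z y := rfl
        _ = ∑' z, m x * (matPow p k x z * p z y) := (hsumm.tsum_mul_left (m x)).symm
        _ = ∑' z, m y * (p y z * matPow p k z x) := by
            refine tsum_congr fun z => ?_
            have h1 : m x * matPow p k x z = m z * matPow p k z x := ih x z
            have h2 : m z * p z y = m y * p y z := hrev z y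
            linear_combination p z y * h1 + matPow p k z x * h2
        _ = m y * ∑' z, p y z * matPow p k z x := hsumm2.tsum_mul_left (m y)
        _ = m y * ∑' z, matPow p 1 y z * matPow p k z x := by
            congr 1; exact tsum_congr fun z => by rw [matPow_one hp]
        _ = m y * matPow p (1 + k) y x := by rw [matPow_chapman hp 1 k]
        _ = m y * matPow p (k + 1) y x := by rw [Nat.add_comm]

end Aux

/-- Lemma 3.1: for a reversible chain with reversibility measure `m`,
if `∑_{y ∉ A} p⁽ⁿ⁾(x,y) ≤ ε` with `m(A) < ∞`, then
`p⁽²ⁿ⁾(x,x) ≥ (1-ε)² m(x)/m(A)`. -/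
theorem reversible_return_probability_lower_bound {X : Type*} [Countable X]
    (p : X → X → ℝ) (hp : IsStochastic p)
    (m : X → ℝ) (hm : ∀ x, 0 < m x)
    (hrev : ∀ x y, m x * p x y = m y * p y x)
    (x : X) (n : ℕ) (hn : 1 ≤ n)
    (A : Set X) (hAfin : Summable (fun a : A => m (a : X)))
    (ε : ℝ) (hε : ε ∈ Set.Ico (0 : ℝ) 1)
    (h : ∑' y, (if y ∈ A then 0 else matPow p n x y) ≤ ε) :
    (1 - ε) ^ 2 * m x / (∑' a : A, m (a : X)) ≤ matPow p (2 * n) x x := by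
  obtain ⟨hε0, hε1⟩ := hε
  set q : X → ℝ := matPow p n x with hq
  have hq0 : ∀ y, 0 ≤ q y := fun y => matPow_nonneg hp n x y
  have hqs : Summable q := (matPow_summable hp n x).1
  have hq1 : ∑' y, q y = 1 := (matPow_summable hp n x).2
  set r : X → ℝ := fun y => matPow p n y x with hr
  have hr0 : ∀ y, 0 ≤ r y := fun y => matPow_nonneg hp n y x
  have hr1 : ∀ y, r y ≤ 1 := fun y => matPow_le_one hp n y x
  have hrev' : ∀ y, m y * r y = m x * q y := fun y => matPow_rev hp m hrev n y x
  -- the 2n-step return probability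
  have h2n : matPow p (2 * n) x x = ∑' y, q y * r y := by
    rw [two_mul, matPow_chapman hp n n]
  have hqrs : Summable fun y => q y * r y :=
    Summable.of_nonneg_of_le (fun y => mul_nonneg (hq0 y) (hr0 y))
      (fun y => by
        calc q y * r y ≤ q y * 1 := mul_le_mul_of_nonneg_left (hr1 y) (hq0 y)
          _ = q y := mul_one _) hqs
  -- 1 - ε ≤ ∑_{a ∈ A} q a
  have hqsub : Summable fun a : A => q (a : X) := hqs.subtype A
  set T : ℝ := ∑' a : A, q (a : X) with hT
  have hind : Summable fun y => A.indicator q y :=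
    Summable.of_nonneg_of_le (fun y => Set.indicator_nonneg (fun z _ => hq0 z) y)
      (fun y => Set.indicator_le_self' (fun z _ => hq0 z) y) hqs
  have hout : Summable fun y => if y ∈ A then 0 else q y :=
    Summable.of_nonneg_of_le (fun y => by split <;> simp [hq0]) (fun y => by
      split
      · exact hq0 y
      · exact le_refl _) hqs
  have hsplit : T + (∑' y, if y ∈ A then 0 else q y) = 1 := by
    have : T = ∑' y, A.indicator q y := tsum_subtype A q
    rw [this, ← Summable.tsum_add hind hout, ← hq1]
    refine tsum_congr fun y => ?_
    by_cases hy : y ∈ A <;> simp [Set.indicator_apply, hy]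
  have hTge : 1 - ε ≤ T := by
    have := h
    nlinarith [hsplit]
  have hT0 : 0 < T := lt_of_lt_of_le (by linarith) hTge
  -- A is nonempty
  have hA : Nonempty A := by
    by_contra hA
    have hAe : IsEmpty (↥A) := not_nonempty_iff.mp hA
    have h0 : (0:ℝ) < ∑' a : A, q (a : X) := hT0
    rw [tsum_empty] at h0
    exact lt_irrefl 0 h0
  obtain ⟨a₀⟩ := hA
  set M : ℝ := ∑' a : A, m (a : X) with hM
  have hM0 : 0 < M :=
    lt_of_lt_of_le (hm a₀) (Summable.le_tsum hAfin a₀ fun a _ => (hm a).le)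
  -- S = ∑_{a ∈ A} q a ^ 2 / m a
  have hSsum : Summable fun a : A => q (a : X) ^ 2 / m (a : X) := by
    have : ∀ a : A, q (a : X) ^ 2 / m (a : X) = (q (a : X) * r (a : X)) / m x := by
      intro a
      rw [div_eq_div_iff (hm _).ne' (hm x).ne']
      linear_combination q (a : X) * (hrev' (a : X)).symm
    simp only [this]
    exact (hqrs.subtype A).div_const (m x)
  set S : ℝ := ∑' a : A, q (a : X) ^ 2 / m (a : X) with hS
  have hS0 : 0 ≤ S := tsum_nonneg fun a => div_nonneg (sq_nonneg _) (hm _).le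
  -- Cauchy-Schwarz: T ^ 2 ≤ M * S
  have hCS : T ^ 2 ≤ M * S := by
    have hMS0 : 0 ≤ M * S := mul_nonneg hM0.le hS0
    have hTle : T ≤ Real.sqrt (M * S) := by
      apply Summable.tsum_le_of_sum_le hqsub
      intro s
      have hcs := Finset.sum_mul_sq_le_sq_mul_sq s
        (fun a : A => Real.sqrt (m (a : X)))
        (fun a : A => q (a : X) / Real.sqrt (m (a : X)))
      have hfg : ∀ a : A, Real.sqrt (m (a : X)) * (q (a : X) / Real.sqrt (m (a : X)))
          = q (a : X) := by
        intro a
        rw [mul_div_assoc']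
        rw [mul_comm, mul_div_assoc]
        rw [div_self (Real.sqrt_ne_zero'.mpr (hm _)), mul_one]
      have hf2 : ∀ a : A, Real.sqrt (m (a : X)) ^ 2 = m (a : X) := fun a =>
        Real.sq_sqrt (hm _).le
      have hg2 : ∀ a : A, (q (a : X) / Real.sqrt (m (a : X))) ^ 2
          = q (a : X) ^ 2 / m (a : X) := by
        intro a
        rw [div_pow, Real.sq_sqrt (hm _).le]
      rw [Finset.sum_congr rfl (fun a _ => hfg a)] at hcs
      rw [Finset.sum_congr rfl (fun a _ => hf2 a)] at hcs
      rw [Finset.sum_congr rfl (fun a _ => hg2 a)] at hcs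
      have hle1 : ∑ a ∈ s, m (a : X) ≤ M := Summable.sum_le_tsum s (fun a _ => (hm _).le) hAfin
      have hle2 : ∑ a ∈ s, q (a : X) ^ 2 / m (a : X) ≤ S :=
        Summable.sum_le_tsum s (fun a _ => div_nonneg (sq_nonneg _) (hm _).le) hSsum
      have hsq : (∑ a ∈ s, q (a : X)) ^ 2 ≤ M * S := by
        calc (∑ a ∈ s, q (a : X)) ^ 2
            ≤ (∑ a ∈ s, m (a : X)) * ∑ a ∈ s, q (a : X) ^ 2 / m (a : X) := hcs
          _ ≤ M * S := by
              apply mul_le_mul hle1 hle2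
                (Finset.sum_nonneg fun a _ => div_nonneg (sq_nonneg _) (hm _).le) hM0.le
      have hsnn : 0 ≤ ∑ a ∈ s, q (a : X) := Finset.sum_nonneg fun a _ => hq0 _
      nlinarith [Real.sq_sqrt hMS0, Real.sqrt_nonneg (M * S), hsq, hsnn]
    nlinarith [Real.sq_sqrt hMS0, Real.sqrt_nonneg (M * S), hT0]
  -- lower bound on the return probability
  have hlower : m x * S ≤ matPow p (2 * n) x x := by
    rw [h2n]
    have heq : ∀ a : A, m x * (q (a : X) ^ 2 / m (a : X)) = q (a : X) * r (a : X) := by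
      intro a
      rw [mul_div_assoc', div_eq_iff (hm (a : X)).ne']
      linear_combination q (a : X) * (hrev' (a : X)).symm
    calc m x * S = ∑' a : A, m x * (q (a : X) ^ 2 / m (a : X)) :=
          (hSsum.tsum_mul_left (m x)).symm
      _ = ∑' a : A, q (a : X) * r (a : X) := tsum_congr fun a => heq a
      _ ≤ ∑' y, q y * r y := Summable.tsum_subtype_le _ _
          (fun y => mul_nonneg (hq0 y) (hr0 y)) hqrs
  -- combine
  rw [div_le_iff₀ hM0]
  have h1e : (1 - ε) ^ 2 ≤ T ^ 2 := by nlinarith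
  have hmx := (hm x).le
  calc (1 - ε) ^ 2 * m x ≤ (M * S) * m x := by nlinarith [hCS, h1e]
    _ ≤ matPow p (2 * n) x x * M := by nlinarith [hlower, hM0.le, hS0]
end
end
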